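/- Let n ≥ 2, let σ denote the (n−1)-dimensional Hausdorff measure on the unit sphere S^{n−1} ⊂ ℝⁿ, let Ψ_S, Ψ_V : (0,∞) → (0,∞) be continuous, fix r₀ > 0, and set w(ρ) = ∫_{r₀}^{ρ} Ψ_V(t) t^{n−1} dt (assumed finite for all ρ > 0). Assume there exists a convex function F on w((0,∞)) with Ψ_S(ρ) ρ^{n−1} = F(w(ρ)) for all ρ > 0. Then for every measurable u : S^{n−1} → (0,∞) with w ∘ u σ-integrable and ∫_{S^{n−1}} w(u(θ)) dσ(θ) = 0, one has ∫_{S^{n−1}} Ψ_S(u(θ)) u(θ)^{n−1} dσ(θ) ≥ Ψ_S(r₀) r₀^{n−1} σ(S^{n−1}). In other words, among boundaries of star-shaped regions enclosing the same weighted volume as the ball of radius r₀, the sphere of radius r₀ minimizes tangential surface area. -/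

import Mathlib

open MeasureTheory Filter Set

/-
Since `w r₀ = 0` and `Ψ_V > 0`, `w` takes values on both sides of `0`, so `0` is an interior
point of the convex set `w((0, ∞))` and `F` has a supporting line `F x ≥ F 0 + m x` there.
Composing with `w ∘ u` gives `Ψ_S(u) u^{n-1} ≥ F 0 + m · w(u)` pointwise on the sphere, and the
volume constraint `∫ w(u) dσ = 0` kills the linear term after integration.
-/

theorem ConvexOn.add_rightDeriv_mul_sub_le {S : Set ℝ} {f : ℝ → ℝ} {x y : ℝ}
    (hf : ConvexOn ℝ S f) (hx : x ∈ interior S) (hy : y ∈ S) :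
    f x + derivWithin f (Ioi x) x * (y - x) ≤ f y := by
  rcases lt_trichotomy x y with hxy | rfl | hyx
  · have h := hf.rightDeriv_le_slope_of_mem_interior hx hy hxy
    rw [slope_def_field, le_div_iff₀ (sub_pos.2 hxy)] at h
    linarith
  · simp
  · have h := (hf.slope_le_leftDeriv_of_mem_interior hy hx hyx).trans
      (hf.leftDeriv_le_rightDeriv_of_mem_interior hx)
    rw [slope_def_field, div_le_iff₀ (sub_pos.2 hyx)] at h
    linarith

theorem Convex.mem_interior_of_lt_of_lt {S : Set ℝ} (hS : Convex ℝ S) {a b x : ℝ}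
    (ha : a ∈ S) (hb : b ∈ S) (hax : a < x) (hxb : x < b) : x ∈ interior S :=
  interior_mono (hS.ordConnected.out ha hb) (by rw [interior_Icc]; exact ⟨hax, hxb⟩)

theorem ofReal_integral_le_lintegral_ofReal {α : Type*} [MeasurableSpace α] {μ : Measure α}
    {f : α → ℝ} (hf : Integrable f μ) :
    ENNReal.ofReal (∫ x, f x ∂μ) ≤ ∫⁻ x, ENNReal.ofReal (f x) ∂μ := by
  refine ENNReal.ofReal_le_of_le_toReal ?_
  rw [integral_eq_lintegral_pos_part_sub_lintegral_neg_part hf]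
  exact sub_le_self _ ENNReal.toReal_nonneg

theorem ofReal_mul_measure_univ_le_lintegral_ofReal_add {α : Type*} [MeasurableSpace α]
    {μ : Measure α} {g : α → ℝ} (hg : Integrable g μ) (hg₀ : ∫ x, g x ∂μ = 0) (c : ℝ) :
    ENNReal.ofReal c * μ univ ≤ ∫⁻ x, ENNReal.ofReal (c + g x) ∂μ := by
  by_cases hμ : μ univ = ⊤
  · rcases le_or_gt c 0 with hc | hc
    · simp [ENNReal.ofReal_of_nonpos hc]
    -- `c ≤ (c + g)⁺ + |g|` and `|g|` has finite integral, so the first integral is infinite.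
    have hsplit : ENNReal.ofReal c * μ univ ≤
        ∫⁻ x, ENNReal.ofReal (c + g x) ∂μ + ∫⁻ x, ENNReal.ofReal |g x| ∂μ := by
      rw [← lintegral_const, ← lintegral_add_right' _ hg.abs.aemeasurable.ennreal_ofReal]
      refine lintegral_mono fun x => (ENNReal.ofReal_le_ofReal ?_).trans ENNReal.ofReal_add_le
      linarith [neg_abs_le (g x)]
    rw [hμ, ENNReal.mul_top (by simpa using hc), top_le_iff, ENNReal.add_eq_top] at hsplit
    rw [hsplit.resolve_right hg.abs.lintegral_lt_top.ne]
    exact le_top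
  · have : IsFiniteMeasure μ := ⟨lt_top_iff_ne_top.2 hμ⟩
    have hint : ∫ x, (c + g x) ∂μ = c * μ.real univ := by
      rw [integral_add (integrable_const c) hg, hg₀, integral_const, smul_eq_mul, add_zero,
        mul_comm]
    rw [← ofReal_measureReal hμ, ← ENNReal.ofReal_mul' measureReal_nonneg, ← hint]
    exact ofReal_integral_le_lintegral_ofReal ((integrable_const c).add hg)

theorem stmt_3_general (n : ℕ)
    (ΨS ΨV : ℝ → ℝ)
    (hΨVpos : ∀ r > (0:ℝ), 0 < ΨV r)
    (r₀ : ℝ) (hr₀ : 0 < r₀)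
    (w : ℝ → ℝ) (hw : ∀ ρ > (0:ℝ), w ρ = ∫ t in r₀..ρ, ΨV t * t ^ (n - 1))
    (hwint : ∀ ρ > (0:ℝ),
      IntervalIntegrable (fun t => ΨV t * t ^ (n - 1)) volume r₀ ρ)
    (F : ℝ → ℝ) (hF : ConvexOn ℝ (w '' Set.Ioi 0) F)
    (hFw : ∀ ρ > (0:ℝ), ΨS ρ * ρ ^ (n - 1) = F (w ρ))
    (u : EuclideanSpace ℝ (Fin n) → ℝ)
    (hupos : ∀ θ ∈ Metric.sphere (0 : EuclideanSpace ℝ (Fin n)) 1, 0 < u θ)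
    (hwu : IntegrableOn (fun θ => w (u θ))
      (Metric.sphere (0 : EuclideanSpace ℝ (Fin n)) 1) (μH[(n : ℝ) - 1]))
    (hwu0 : ∫ θ in Metric.sphere (0 : EuclideanSpace ℝ (Fin n)) 1,
      w (u θ) ∂(μH[(n : ℝ) - 1]) = 0) :
    ENNReal.ofReal (ΨS r₀ * r₀ ^ (n - 1)) *
        μH[(n : ℝ) - 1] (Metric.sphere (0 : EuclideanSpace ℝ (Fin n)) 1) ≤
      ∫⁻ θ in Metric.sphere (0 : EuclideanSpace ℝ (Fin n)) 1,
        ENNReal.ofReal (ΨS (u θ) * u θ ^ (n - 1)) ∂(μH[(n : ℝ) - 1]) := by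
  have hw₀ : w r₀ = 0 := by rw [hw r₀ hr₀, intervalIntegral.integral_same]
  have hdensity_pos {a b : ℝ} (ha : 0 < a) (hab : a < b)
      (hi : IntervalIntegrable (fun t => ΨV t * t ^ (n - 1)) volume a b) :
      0 < ∫ t in a..b, ΨV t * t ^ (n - 1) :=
    intervalIntegral.intervalIntegral_pos_of_pos_on hi
      (fun t ht => mul_pos (hΨVpos t (ha.trans ht.1)) (pow_pos (ha.trans ht.1) _)) hab
  have hw_neg : w (r₀ / 2) < 0 := by
    rw [hw _ (half_pos hr₀), intervalIntegral.integral_symm, neg_lt_zero]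
    exact hdensity_pos (half_pos hr₀) (half_lt_self hr₀) (hwint _ (half_pos hr₀)).symm
  have h2r₀ : 0 < 2 * r₀ := by positivity
  have hw_pos : 0 < w (2 * r₀) := by
    rw [hw _ h2r₀]
    exact hdensity_pos hr₀ (by linarith) (hwint _ h2r₀)
  have hzero_mem : (0 : ℝ) ∈ interior (w '' Ioi 0) :=
    hF.1.mem_interior_of_lt_of_lt ⟨_, half_pos hr₀, rfl⟩ ⟨_, h2r₀, rfl⟩ hw_neg hw_pos
  set m := derivWithin F (Ioi 0) 0
  have hsupport : ∀ θ ∈ Metric.sphere (0 : EuclideanSpace ℝ (Fin n)) 1,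
      F 0 + m * w (u θ) ≤ ΨS (u θ) * u θ ^ (n - 1) := fun θ hθ => by
    have h := hF.add_rightDeriv_mul_sub_le hzero_mem ⟨u θ, hupos θ hθ, rfl⟩
    rwa [sub_zero, ← hFw _ (hupos θ hθ)] at h
  calc ENNReal.ofReal (ΨS r₀ * r₀ ^ (n - 1)) *
        μH[(n : ℝ) - 1] (Metric.sphere (0 : EuclideanSpace ℝ (Fin n)) 1)
      = ENNReal.ofReal (F 0) *
          (μH[(n : ℝ) - 1].restrict (Metric.sphere (0 : EuclideanSpace ℝ (Fin n)) 1)) univ := by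
        rw [hFw r₀ hr₀, hw₀, Measure.restrict_apply_univ]
    _ ≤ ∫⁻ θ in Metric.sphere (0 : EuclideanSpace ℝ (Fin n)) 1,
          ENNReal.ofReal (F 0 + m * w (u θ)) ∂(μH[(n : ℝ) - 1]) :=
        ofReal_mul_measure_univ_le_lintegral_ofReal_add (hwu.const_mul m)
          (by rw [integral_const_mul, hwu0, mul_zero]) _
    _ ≤ _ := setLIntegral_mono' Metric.isClosed_sphere.measurableSet
        fun θ hθ => ENNReal.ofReal_le_ofReal (hsupport θ hθ)

/-- In `ℝⁿ ∖ {0}` with radial surface density `Ψ_S` and radial volume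
density `Ψ_V`, if the weighted surface area of spheres is a convex function of the
weighted volume of annuli, then among boundaries of star-shaped regions enclosing the
same weighted volume as the ball of radius `r₀`, the sphere of radius `r₀` minimizes
tangential surface area.  Here `σ = μH[n-1]` is the `(n-1)`-dimensional Hausdorff measure
on the unit sphere. -/
theorem stmt_3 (n : ℕ) (hn : 2 ≤ n)
    (ΨS ΨV : ℝ → ℝ)
    (hΨS : ContinuousOn ΨS (Set.Ioi 0)) (hΨSpos : ∀ r > (0:ℝ), 0 < ΨS r)
    (hΨV : ContinuousOn ΨV (Set.Ioi 0)) (hΨVpos : ∀ r > (0:ℝ), 0 < ΨV r)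
    (r₀ : ℝ) (hr₀ : 0 < r₀)
    (w : ℝ → ℝ) (hw : ∀ ρ > (0:ℝ), w ρ = ∫ t in r₀..ρ, ΨV t * t ^ (n - 1))
    (hwint : ∀ ρ > (0:ℝ),
      IntervalIntegrable (fun t => ΨV t * t ^ (n - 1)) volume r₀ ρ)
    (F : ℝ → ℝ) (hF : ConvexOn ℝ (w '' Set.Ioi 0) F)
    (hFw : ∀ ρ > (0:ℝ), ΨS ρ * ρ ^ (n - 1) = F (w ρ))
    (u : EuclideanSpace ℝ (Fin n) → ℝ) (hu : Measurable u)
    (hupos : ∀ θ ∈ Metric.sphere (0 : EuclideanSpace ℝ (Fin n)) 1, 0 < u θ)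
    (hwu : IntegrableOn (fun θ => w (u θ))
      (Metric.sphere (0 : EuclideanSpace ℝ (Fin n)) 1) (μH[(n : ℝ) - 1]))
    (hwu0 : ∫ θ in Metric.sphere (0 : EuclideanSpace ℝ (Fin n)) 1,
      w (u θ) ∂(μH[(n : ℝ) - 1]) = 0) :
    ENNReal.ofReal (ΨS r₀ * r₀ ^ (n - 1)) *
        μH[(n : ℝ) - 1] (Metric.sphere (0 : EuclideanSpace ℝ (Fin n)) 1) ≤
      ∫⁻ θ in Metric.sphere (0 : EuclideanSpace ℝ (Fin n)) 1,
        ENNReal.ofReal (ΨS (u θ) * u θ ^ (n - 1)) ∂(μH[(n : ℝ) - 1]) :=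
  stmt_3_general n ΨS ΨV hΨVpos r₀ hr₀ w hw hwint F hF hFw u hupos hwu hwu0
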